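/- arXiv:2204.03425 — 2 statements merged into one kernel-verified Lean document; each statement's English description precedes it below -/
import Mathlib

section
/- Let p > 0 be a real number. The function g : (−∞, p) → ℝ defined by g(t) = exp(−t)·B(p − t) = (p − t)/(exp(p) − exp(t)), where B(z) = z/(exp(z) − 1), is strictly decreasing on (−∞, p). -/
/-- The Bernoulli function `B(z) = z / (exp z − 1)` (for `z ≠ 0`). -/
noncomputable def bernoulliB (z : ℝ) : ℝ := z / (Real.exp z - 1)

open Real Set

/-! `e^{-t} B(p - t)` is the reciprocal of the slope of `exp` on `[t, p]`, and by strict convexity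
of `exp` this slope strictly increases with `t`. -/

/-- Holds for all `t`, since at `t = p` both sides are `0 / 0 = 0`. -/
theorem exp_neg_mul_bernoulliB_sub (p t : ℝ) :
    exp (-t) * bernoulliB (p - t) = (p - t) / (exp p - exp t) := by
  have hexp : exp p - exp t = exp t * (exp (p - t) - 1) := by
    rw [mul_sub, ← exp_add, add_sub_cancel, mul_one]
  rw [bernoulliB, hexp, exp_neg, div_mul_eq_div_div_swap, inv_mul_eq_div]

theorem strictAntiOn_sub_div_exp_sub_exp (p : ℝ) :
    StrictAntiOn (fun t => (p - t) / (exp p - exp t)) (Iio p) := by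
  intro a ha b hb hab
  have hslope : (exp p - exp a) / (p - a) < (exp p - exp b) / (p - b) :=
    strictConvexOn_exp.secant_strict_mono_aux3 (mem_univ a) (mem_univ p) hab hb
  have hpos : 0 < (exp p - exp a) / (p - a) :=
    div_pos (sub_pos.mpr (exp_lt_exp.mpr ha)) (sub_pos.mpr ha)
  simpa only [inv_div] using inv_strictAnti₀ hpos hslope

theorem coefficient_function_strictAntiOn_general (p : ℝ) :
    (∀ t ∈ Set.Iio p,
      Real.exp (-t) * bernoulliB (p - t) = (p - t) / (Real.exp p - Real.exp t)) ∧
    StrictAntiOn (fun t => Real.exp (-t) * bernoulliB (p - t)) (Set.Iio p) := by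
  refine ⟨fun t _ => exp_neg_mul_bernoulliB_sub p t, ?_⟩
  simpa only [exp_neg_mul_bernoulliB_sub] using strictAntiOn_sub_div_exp_sub_exp p

theorem coefficient_function_strictAntiOn (p : ℝ) (hp : 0 < p) :
    (∀ t ∈ Set.Iio p,
      Real.exp (-t) * bernoulliB (p - t) = (p - t) / (Real.exp p - Real.exp t)) ∧
    StrictAntiOn (fun t => Real.exp (-t) * bernoulliB (p - t)) (Set.Iio p) :=
  coefficient_function_strictAntiOn_general p
end

section
/- Let B(z) = z/(exp(z) − 1) for z ≠ 0 and let p > 0. (i) For every t with 0 < t < p: exp(−t)·B(p − t) < B(p) and B(−(p − t)) < B(−p). (ii) For every t < 0: exp(−t)·B(p − t) > B(p) and B(−(p − t)) > B(−p). -/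
/-!
Since `exp (-t) * B(p - t) = (p - t) / (exp p - exp t)`, the adjusted coefficient of `c_{j+1}` is
the reciprocal of the slope of the secant of `exp` through `t` and `p`. By strict convexity of
`exp` this slope is strictly increasing in `t`, so the coefficient is strictly decreasing in `t`
and `t = 0` gives `B(p)`. The coefficient of `c_j` follows from `B(-z) = exp z * B(z)`, which makes
it `exp p` times the former.
-/

open Real

lemma bernoulliB_neg (z : ℝ) : bernoulliB (-z) = exp z * bernoulliB z := calc
  bernoulliB (-z) = -z * exp z / ((exp (-z) - 1) * exp z) :=
    (mul_div_mul_right _ _ (exp_pos z).ne').symm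
  _ = exp z * bernoulliB z := by
    rw [sub_mul, ← exp_add, neg_add_cancel, exp_zero, one_mul, ← neg_sub, div_neg, bernoulliB]
    ring

lemma exp_neg_mul_bernoulliB_sub_eq_inv_slope (p t : ℝ) :
    exp (-t) * bernoulliB (p - t) = (slope exp p t)⁻¹ := by
  rw [slope_def_field, inv_div, bernoulliB, exp_sub, exp_neg, mul_div_assoc', inv_mul_eq_div,
    div_div, mul_sub, mul_div_cancel₀ _ (exp_pos t).ne', mul_one, ← neg_sub t p, ← neg_sub (exp t),
    neg_div_neg_eq]

lemma exp_neg_mul_bernoulliB_sub_lt {p s t : ℝ} (hst : s < t) (hs : s ≠ p) (ht : t ≠ p) :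
    exp (-t) * bernoulliB (p - t) < exp (-s) * bernoulliB (p - s) := by
  have hslope_pos {x : ℝ} (hx : x ≠ p) : 0 < slope exp p x :=
    (exp_strictMono.strictMonoOn Set.univ).slope_pos (Set.mem_univ _) (Set.mem_univ _) hx.symm
  rw [exp_neg_mul_bernoulliB_sub_eq_inv_slope, exp_neg_mul_bernoulliB_sub_eq_inv_slope,
    inv_lt_inv₀ (hslope_pos ht) (hslope_pos hs), slope_def_field, slope_def_field]
  exact strictConvexOn_exp.secant_strict_mono (Set.mem_univ p) (Set.mem_univ s) (Set.mem_univ t)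
    hs ht hst

lemma bernoulliB_neg_sub_lt {p s t : ℝ} (hst : s < t) (hs : s ≠ p) (ht : t ≠ p) :
    bernoulliB (-(p - t)) < bernoulliB (-(p - s)) := by
  have hfactor (x : ℝ) : bernoulliB (-(p - x)) = exp p * (exp (-x) * bernoulliB (p - x)) := by
    rw [bernoulliB_neg, ← mul_assoc, ← exp_add, sub_eq_add_neg]
  rw [hfactor, hfactor]
  exact mul_lt_mul_of_pos_left (exp_neg_mul_bernoulliB_sub_lt hst hs ht) (exp_pos p)

theorem upwind_coefficient_comparison (p : ℝ) (hp : 0 < p) :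
    (∀ t : ℝ, 0 < t → t < p →
      Real.exp (-t) * bernoulliB (p - t) < bernoulliB p ∧
      bernoulliB (-(p - t)) < bernoulliB (-p)) ∧
    (∀ t : ℝ, t < 0 →
      Real.exp (-t) * bernoulliB (p - t) > bernoulliB p ∧
      bernoulliB (-(p - t)) > bernoulliB (-p)) := by
  refine ⟨fun t ht htp ↦ ?_, fun t ht ↦ ?_⟩
  · simpa only [neg_zero, exp_zero, one_mul, sub_zero] using
      And.intro (exp_neg_mul_bernoulliB_sub_lt ht hp.ne htp.ne)
        (bernoulliB_neg_sub_lt ht hp.ne htp.ne)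
  · have htp : t ≠ p := (ht.trans hp).ne
    simpa only [neg_zero, exp_zero, one_mul, sub_zero] using
      And.intro (exp_neg_mul_bernoulliB_sub_lt ht htp hp.ne)
        (bernoulliB_neg_sub_lt ht htp hp.ne)
end
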